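/- If a residuated lattice satisfies the left prelinearity law (x\y ∧ e) ∨ (y\x ∧ e) = e, then it satisfies x\(y ∨ z) = (x\y) ∨ (x\z). -/

import Mathlib

/-! Multiplying `u = x \ (y ⊔ z)` on the right by `1 = (z \ y ⊓ 1) ⊔ (y \ z ⊓ 1)` splits it into
two joinands. Since `(y ⊔ z) * (z \ y ⊓ 1) ≤ y`, the first one lies below `x \ y`; symmetrically
the second lies below `x \ z`. The reverse inequality holds in every residuated lattice. -/

/-- A residuated lattice: a lattice-ordered monoid with left and right residuals. -/
class ResiduatedLattice (α : Type*) extends Lattice α, Monoid α where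
  /-- `ldiv a c` is `a \ c`. -/
  ldiv : α → α → α
  /-- `rdiv c b` is `c / b`. -/
  rdiv : α → α → α
  mul_le_iff_le_rdiv : ∀ a b c : α, a * b ≤ c ↔ a ≤ rdiv c b
  mul_le_iff_le_ldiv : ∀ a b c : α, a * b ≤ c ↔ b ≤ ldiv a c

open ResiduatedLattice

namespace ResiduatedLattice

variable {α : Type*} [ResiduatedLattice α]

theorem mul_ldiv_le (a c : α) : a * ldiv a c ≤ c :=
  (mul_le_iff_le_ldiv a (ldiv a c) c).2 le_rfl

instance : MulLeftMono α where
  elim a b c h := (mul_le_iff_le_ldiv a b (a * c)).2 (h.trans ((mul_le_iff_le_ldiv a c _).1 le_rfl))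

instance : MulRightMono α where
  elim a b c h := (mul_le_iff_le_rdiv b a (c * a)).2 (h.trans ((mul_le_iff_le_rdiv c a _).1 le_rfl))

theorem ldiv_monotone (a : α) : Monotone (ldiv a) := fun _ _ h =>
  (mul_le_iff_le_ldiv _ _ _).1 ((mul_ldiv_le a _).trans h)

theorem ldiv_mul_le_ldiv_mul (a b c : α) : ldiv a b * c ≤ ldiv a (b * c) := by
  rw [← mul_le_iff_le_ldiv, ← mul_assoc]
  gcongr
  exact mul_ldiv_le a b

theorem mul_sup (a b c : α) : a * (b ⊔ c) = a * b ⊔ a * c := by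
  refine le_antisymm ?_ (sup_le (by gcongr; exact le_sup_left) (by gcongr; exact le_sup_right))
  rw [mul_le_iff_le_ldiv]
  exact sup_le ((mul_le_iff_le_ldiv _ _ _).1 le_sup_left) ((mul_le_iff_le_ldiv _ _ _).1 le_sup_right)

theorem sup_mul (a b c : α) : (a ⊔ b) * c = a * c ⊔ b * c := by
  refine le_antisymm ?_ (sup_le (by gcongr; exact le_sup_left) (by gcongr; exact le_sup_right))
  rw [mul_le_iff_le_rdiv]
  exact sup_le ((mul_le_iff_le_rdiv _ _ _).1 le_sup_left) ((mul_le_iff_le_rdiv _ _ _).1 le_sup_right)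

theorem sup_mul_ldiv_inf_one_le (y z : α) : (y ⊔ z) * (ldiv z y ⊓ 1) ≤ y := by
  rw [sup_mul]
  refine sup_le ?_ ?_
  · calc y * (ldiv z y ⊓ 1) ≤ y * 1 := by gcongr; exact inf_le_right
      _ = y := mul_one y
  · calc z * (ldiv z y ⊓ 1) ≤ z * ldiv z y := by gcongr; exact inf_le_left
      _ ≤ y := mul_ldiv_le z y

theorem ldiv_sup_mul_ldiv_inf_one_le (x y z : α) :
    ldiv x (y ⊔ z) * (ldiv z y ⊓ 1) ≤ ldiv x y :=
  (ldiv_mul_le_ldiv_mul _ _ _).trans (ldiv_monotone x (sup_mul_ldiv_inf_one_le y z))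

end ResiduatedLattice

theorem lpl_implies_lpl3 {α : Type*} [ResiduatedLattice α]
    (hLPL : ∀ x y : α, (ldiv x y ⊓ 1) ⊔ (ldiv y x ⊓ 1) = 1) (x y z : α) :
    ldiv x (y ⊔ z) = ldiv x y ⊔ ldiv x z := by
  refine le_antisymm ?_ ((ldiv_monotone x).le_map_sup y z)
  set u := ldiv x (y ⊔ z)
  calc u = u * ((ldiv z y ⊓ 1) ⊔ (ldiv y z ⊓ 1)) := by rw [hLPL, mul_one]
    _ = u * (ldiv z y ⊓ 1) ⊔ u * (ldiv y z ⊓ 1) := ResiduatedLattice.mul_sup _ _ _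
    _ ≤ ldiv x y ⊔ ldiv x z := by
      refine sup_le_sup (ldiv_sup_mul_ldiv_inf_one_le x y z) ?_
      simpa only [sup_comm] using ldiv_sup_mul_ldiv_inf_one_le x z y
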